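/- arXiv:1906.06197 — 3 statements merged into one kernel-verified Lean document; each statement's English description precedes it below -/
import Mathlib

section
/- Let T : E × ℰ → [0,1] be a Markov transition kernel such that T²(z,{z}) = 1 for every z ∈ E. Then there exists an involution τ : E → E such that T(z,·) = δ_{τ(z)} for every z ∈ E. -/
/-!
Write `T²(z, {z}) = ∫ T(w, {z}) T(z, dw) = 1`. Since `T(w, {z}) ≤ 1`, this forces
`T(w, ·) = δ_z` for `T(z, ·)`-almost every `w`, in particular for some `w = σ z`.
Then `T²(σ z, ·) = T(z, ·)`, so `T(z, {σ z}) = 1`, i.e. `T(z, ·) = δ_{σ z}`;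
applying this at `σ z` gives `δ_{σ (σ z)} = T(σ z, ·) = δ_z`.
-/

open MeasureTheory ProbabilityTheory

open scoped ENNReal

namespace MeasureTheory

variable {α : Type*} [MeasurableSpace α] {μ : Measure α} [IsProbabilityMeasure μ]

lemma Measure.eq_dirac_of_measure_singleton_eq_one [MeasurableSingletonClass α] {a : α}
    (h : μ {a} = 1) : μ = Measure.dirac a := by
  have hae : ∀ᵐ x ∂μ, x ∈ ({a} : Finset α) := by
    simp only [Finset.mem_singleton, ae_iff]
    exact (prob_compl_eq_zero_iff (measurableSet_singleton a)).2 h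
  simpa [h] using Measure.ae_mem_finset_iff.1 hae

lemma ae_eq_one_of_le_one_of_lintegral_eq_one {f : α → ℝ≥0∞} (hf_le : ∀ x, f x ≤ 1)
    (hf : ∫⁻ x, f x ∂μ = 1) : f =ᵐ[μ] 1 :=
  ae_eq_of_ae_le_of_lintegral_le (.of_forall hf_le) (by simp [hf]) aemeasurable_const
    (by simp [hf])

end MeasureTheory

namespace ProbabilityTheory.Kernel

variable {α β γ : Type*} [MeasurableSpace α] [MeasurableSpace β] [MeasurableSpace γ]

lemma ae_apply_eq_one_of_comp_apply_eq_one {κ : Kernel α β} {η : Kernel β γ}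
    [IsMarkovKernel κ] [IsMarkovKernel η] {a : α} {s : Set γ} (hs : MeasurableSet s)
    (h : (η ∘ₖ κ) a s = 1) : ∀ᵐ b ∂κ a, η b s = 1 := by
  rw [comp_apply' η κ a hs] at h
  exact ae_eq_one_of_le_one_of_lintegral_eq_one (fun _ ↦ prob_le_one) h

lemma exists_apply_eq_dirac_of_comp_apply_singleton_eq_one [MeasurableSingletonClass γ]
    {κ : Kernel α β} {η : Kernel β γ} [IsMarkovKernel κ] [IsMarkovKernel η] {a : α} {c : γ}
    (h : (η ∘ₖ κ) a {c} = 1) : ∃ b, η b = Measure.dirac c :=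
  ((ae_apply_eq_one_of_comp_apply_eq_one (measurableSet_singleton c) h).exists).imp
    fun _ ↦ Measure.eq_dirac_of_measure_singleton_eq_one

end ProbabilityTheory.Kernel

/-- If a Markov kernel `T` satisfies `T²(z, {z}) = 1` for every `z`, then there is an
involution `τ : E → E` with `T(z, ·) = δ_{τ(z)}` for every `z`. -/
theorem markov_kernel_two_step_diagonal_is_deterministic_involution
    {E : Type*} [MeasurableSpace E] [MeasurableSingletonClass E]
    (T : Kernel E E) [IsMarkovKernel T]
    (h : ∀ z : E, (T ∘ₖ T) z {z} = 1) :
    ∃ τ : E → E, Function.Involutive τ ∧ ∀ z : E, T z = Measure.dirac (τ z) := by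
  choose σ hσ using fun z ↦ Kernel.exists_apply_eq_dirac_of_comp_apply_singleton_eq_one (h z)
  have hT : ∀ z, T z = Measure.dirac (σ z) := fun z ↦ by
    have hσz := h (σ z)
    rw [Kernel.comp_apply, hσ z, Measure.dirac_bind T.measurable] at hσz
    exact Measure.eq_dirac_of_measure_singleton_eq_one hσz
  exact ⟨σ, fun z ↦ injective_dirac (by simp only [← hT, hσ]), hT⟩
end

section
/- Let P be a (μ,Q)-self-adjoint Markov operator on L²(μ), i.e. ⟨Pf,g⟩_μ = ⟨f,QPQg⟩_μ for all f,g, where Q is an isometric involution. Then QP and PQ are μ-self-adjoint operators. Conversely, if P is μ-self-adjoint then QP and PQ are (μ,Q)-self-adjoint. Consequently any (μ,Q)-self-adjoint Markov operator is a composition of two μ-self-adjoint Markov operators. -/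
open MeasureTheory
open scoped RealInnerProductSpace

/-- If `P` is `(μ,Q)`-self-adjoint then `QP` and `PQ` are `μ`-self-adjoint; conversely, if
`P` is `μ`-self-adjoint then `QP` and `PQ` are `(μ,Q)`-self-adjoint.  Consequently any
`(μ,Q)`-self-adjoint Markov operator is the composition of two `μ`-self-adjoint operators. -/
theorem muQ_self_adjoint_reversible_parts
    {E : Type*} [MeasurableSpace E] (μ : Measure E) [IsProbabilityMeasure μ]
    (Q P : Lp ℝ 2 μ →L[ℝ] Lp ℝ 2 μ)
    (hiso : ∀ f g : Lp ℝ 2 μ, ⟪Q f, Q g⟫ = ⟪f, g⟫)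
    (hinv : ∀ f : Lp ℝ 2 μ, Q (Q f) = f) :
    ((∀ f g : Lp ℝ 2 μ, ⟪P f, g⟫ = ⟪f, Q (P (Q g))⟫) →
        (∀ f g : Lp ℝ 2 μ, ⟪Q (P f), g⟫ = ⟪f, Q (P g)⟫) ∧
        (∀ f g : Lp ℝ 2 μ, ⟪P (Q f), g⟫ = ⟪f, P (Q g)⟫)) ∧
    ((∀ f g : Lp ℝ 2 μ, ⟪P f, g⟫ = ⟪f, P g⟫) →
        (∀ f g : Lp ℝ 2 μ, ⟪Q (P f), g⟫ = ⟪f, Q (Q (P (Q g)))⟫) ∧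
        (∀ f g : Lp ℝ 2 μ, ⟪P (Q f), g⟫ = ⟪f, Q (P (Q (Q g)))⟫)) ∧
    ((∀ f g : Lp ℝ 2 μ, ⟪P f, g⟫ = ⟪f, Q (P (Q g))⟫) →
        ∃ A B : Lp ℝ 2 μ →L[ℝ] Lp ℝ 2 μ,
          (∀ f g : Lp ℝ 2 μ, ⟪A f, g⟫ = ⟪f, A g⟫) ∧
          (∀ f g : Lp ℝ 2 μ, ⟪B f, g⟫ = ⟪f, B g⟫) ∧ P = A ∘L B) := by
  have qsa : ∀ f g : Lp ℝ 2 μ, ⟪Q f, g⟫ = ⟪f, Q g⟫ := by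
    intro f g
    calc ⟪Q f, g⟫ = ⟪Q f, Q (Q g)⟫ := by rw [hinv]
    _ = ⟪f, Q g⟫ := hiso f (Q g)
  refine ⟨?_, ?_, ?_⟩
  · intro h
    constructor
    · intro f g
      calc ⟪Q (P f), g⟫ = ⟪P f, Q g⟫ := qsa _ _
      _ = ⟪f, Q (P (Q (Q g)))⟫ := h _ _
      _ = ⟪f, Q (P g)⟫ := by rw [hinv]
    · intro f g
      calc ⟪P (Q f), g⟫ = ⟪Q f, Q (P (Q g))⟫ := h _ _
      _ = ⟪f, P (Q g)⟫ := hiso _ _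
  · intro h
    constructor
    · intro f g
      calc ⟪Q (P f), g⟫ = ⟪P f, Q g⟫ := qsa _ _
      _ = ⟪f, P (Q g)⟫ := h _ _
      _ = ⟪f, Q (Q (P (Q g)))⟫ := by rw [hinv]
    · intro f g
      calc ⟪P (Q f), g⟫ = ⟪Q f, P g⟫ := h _ _
      _ = ⟪f, Q (P g)⟫ := qsa _ _
      _ = ⟪f, Q (P (Q (Q g)))⟫ := by rw [hinv]
  · intro h
    refine ⟨P ∘L Q, Q, ?_, qsa, ?_⟩
    · intro f g
      simp only [ContinuousLinearMap.comp_apply]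
      calc ⟪P (Q f), g⟫ = ⟪Q f, Q (P (Q g))⟫ := h _ _
      _ = ⟪f, P (Q g)⟫ := hiso _ _
    · ext f
      simp [hinv]
end

section
/- With φ_ε as above, the function satisfies the Metropolis-type symmetry r·φ_ε(1/r) = φ_ε(r) for all r > 0, and 0 < φ_ε(r) < 1 for all ε > 0 and r > 0. -/
open MeasureTheory ProbabilityTheory
open scoped NNReal ENNReal

lemma gauss_integral_eq (g : ℝ → ℝ) :
    ∫ z, g z ∂(gaussianReal 0 1) = ∫ z, gaussianPDFReal 0 1 z * g z := by
  rw [gaussianReal_of_var_ne_zero _ one_ne_zero]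
  have h : gaussianPDF 0 1
      = fun x => ((Real.toNNReal (gaussianPDFReal 0 1 x) : ℝ≥0) : ℝ≥0∞) := rfl
  rw [h, integral_withDensity_eq_integral_smul ((measurable_gaussianPDFReal 0 1).real_toNNReal) g]
  refine integral_congr_ae (Filter.Eventually.of_forall fun z => ?_)
  simp [NNReal.smul_def, Real.coe_toNNReal _ (gaussianPDFReal_nonneg 0 1 z)]

lemma gauss_pdf_shift (s z : ℝ) :
    gaussianPDFReal 0 1 (s - z) = gaussianPDFReal 0 1 z * Real.exp (s * z - s ^ 2 / 2) := by
  simp only [gaussianPDFReal, NNReal.coe_one, mul_one, sub_zero]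
  rw [show (-(s - z) ^ 2 / 2 : ℝ) = (-z ^ 2 / 2) + (s * z - s ^ 2 / 2) by ring, Real.exp_add]
  ring

lemma integral_comp_sub_left_real (k : ℝ → ℝ) (s : ℝ) :
    ∫ z : ℝ, k (s - z) = ∫ z : ℝ, k z := by
  have h2 := integral_neg_eq_self (fun y : ℝ => k (s + y)) (MeasureTheory.volume)
  simp only [sub_eq_add_neg]
  rw [h2]
  exact integral_add_left_eq_self (μ := MeasureTheory.volume) k s

/-- The regularised acceptance function
`φ_ε(r) = ∫ min{1, r·exp(−ε/2 + √ε·z)} N(z;0,1) dz` satisfies the Metropolis-type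
symmetry `r·φ_ε(1/r) = φ_ε(r)` for all `r > 0`, and `0 < φ_ε(r) < 1` for all
`ε > 0`, `r > 0`. -/
theorem penalty_acceptance_symmetry_and_strict_bounds
    (ε : ℝ) (hε : 0 < ε)
    (φε : ℝ → ℝ)
    (hφε : ∀ r : ℝ, φε r
        = ∫ z, min 1 (r * Real.exp (-(ε / 2) + Real.sqrt ε * z)) ∂(gaussianReal 0 1)) :
    (∀ r : ℝ, 0 < r → r * φε r⁻¹ = φε r) ∧
    (∀ r : ℝ, 0 < r → 0 < φε r ∧ φε r < 1) := by
  set s := Real.sqrt ε with hs_def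
  have hs : 0 < s := Real.sqrt_pos.mpr hε
  have hs2 : s ^ 2 = ε := Real.sq_sqrt hε.le
  have hp_pos : ∀ z, 0 < gaussianPDFReal 0 1 z :=
    fun z => gaussianPDFReal_pos 0 1 z one_ne_zero
  have hφ' : ∀ r : ℝ,
      φε r = ∫ z, gaussianPDFReal 0 1 z * min 1 (r * Real.exp (-(ε / 2) + s * z)) := by
    intro r; rw [hφε, gauss_integral_eq]
  constructor
  · -- symmetry
    intro r hr
    have key : ∀ z : ℝ,
        r * (gaussianPDFReal 0 1 z * min 1 (r⁻¹ * Real.exp (-(ε / 2) + s * z)))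
          = (fun y => gaussianPDFReal 0 1 y * min 1 (r * Real.exp (-(ε / 2) + s * y)))
            (s - z) := by
      intro z
      show r * (gaussianPDFReal 0 1 z * min 1 (r⁻¹ * Real.exp (-(ε / 2) + s * z)))
          = gaussianPDFReal 0 1 (s - z) * min 1 (r * Real.exp (-(ε / 2) + s * (s - z)))
      have hB : Real.exp (-(ε / 2) + s * (s - z)) = Real.exp (ε / 2 - s * z) := by
        congr 1
        rw [mul_sub, ← hs2]; ring
      have h2 : Real.exp (s * z - ε / 2) * min 1 (r * Real.exp (ε / 2 - s * z))
          = min (Real.exp (s * z - ε / 2)) r := by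
        rw [mul_min_of_nonneg _ _ (Real.exp_nonneg _), mul_one,
          show Real.exp (s * z - ε / 2) * (r * Real.exp (ε / 2 - s * z))
            = Real.exp (s * z - ε / 2) * Real.exp (ε / 2 - s * z) * r by ring,
          ← Real.exp_add, show (s * z - ε / 2) + (ε / 2 - s * z) = 0 by ring,
          Real.exp_zero, one_mul]
      have h1 : r * min 1 (r⁻¹ * Real.exp (-(ε / 2) + s * z))
          = min r (Real.exp (s * z - ε / 2)) := by
        rw [mul_min_of_nonneg _ _ hr.le, mul_one]
        congr 1
        rw [← mul_assoc, mul_inv_cancel₀ hr.ne', one_mul]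
        congr 1; ring
      rw [hB, gauss_pdf_shift, hs2, mul_assoc, h2,
        show r * (gaussianPDFReal 0 1 z * min 1 (r⁻¹ * Real.exp (-(ε / 2) + s * z)))
          = gaussianPDFReal 0 1 z * (r * min 1 (r⁻¹ * Real.exp (-(ε / 2) + s * z))) by ring,
        h1, min_comm]
    calc r * φε r⁻¹
        = r * ∫ z, gaussianPDFReal 0 1 z * min 1 (r⁻¹ * Real.exp (-(ε / 2) + s * z)) := by
          rw [hφ']
      _ = ∫ z, r * (gaussianPDFReal 0 1 z * min 1 (r⁻¹ * Real.exp (-(ε / 2) + s * z))) := by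
          rw [integral_const_mul]
      _ = ∫ z, (fun y => gaussianPDFReal 0 1 y * min 1 (r * Real.exp (-(ε / 2) + s * y)))
            (s - z) :=
          integral_congr_ae (Filter.Eventually.of_forall key)
      _ = ∫ z, gaussianPDFReal 0 1 z * min 1 (r * Real.exp (-(ε / 2) + s * z)) :=
          integral_comp_sub_left_real
            (fun y => gaussianPDFReal 0 1 y * min 1 (r * Real.exp (-(ε / 2) + s * y))) s
      _ = φε r := (hφ' r).symm
  · -- bounds
    intro r hr
    set f : ℝ → ℝ := fun z => min 1 (r * Real.exp (-(ε / 2) + s * z)) with hf_def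
    have hf_pos : ∀ z, 0 < f z := fun z => lt_min one_pos (mul_pos hr (Real.exp_pos _))
    have hf_le : ∀ z, f z ≤ 1 := fun z => min_le_left _ _
    have hf_cont : Continuous f :=
      continuous_const.min (continuous_const.mul
        ((continuous_const.add (continuous_const.mul continuous_id)).rexp))
    have hf_int : Integrable f (gaussianReal 0 1) := by
      refine (integrable_const (1 : ℝ)).mono' hf_cont.aestronglyMeasurable
        (Filter.Eventually.of_forall fun z => ?_)
      rw [Real.norm_eq_abs, abs_le]
      exact ⟨by linarith [hf_pos z], by simpa using hf_le z⟩
    have hφ : φε r = ∫ z, f z ∂(gaussianReal 0 1) := hφε r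
    constructor
    · rw [hφ, integral_pos_iff_support_of_nonneg (fun z => (hf_pos z).le) hf_int]
      have : Function.support f = Set.univ := Set.eq_univ_of_forall fun z => (hf_pos z).ne'
      rw [this, measure_univ]
      exact zero_lt_one
    · have hsub : 0 < ∫ z, (1 - f z) ∂(gaussianReal 0 1) := by
        rw [integral_pos_iff_support_of_nonneg
          (fun z => sub_nonneg.mpr (hf_le z)) ((integrable_const 1).sub hf_int)]
        set t := (ε / 2 + Real.log r⁻¹) / s with ht_def
        have hIio : Set.Iio t ⊆ Function.support (fun z => 1 - f z) := by
          intro z hz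
          have hz' : s * z < ε / 2 + Real.log r⁻¹ := by
            have := (lt_div_iff₀ hs).mp hz
            linarith
          have hE' : Real.exp (-(ε / 2) + s * z) < r⁻¹ := by
            rw [show r⁻¹ = Real.exp (Real.log r⁻¹) from
              (Real.exp_log (inv_pos.mpr hr)).symm]
            exact Real.exp_lt_exp.mpr (by linarith)
          have hrE : r * Real.exp (-(ε / 2) + s * z) < 1 := by
            have := mul_lt_mul_of_pos_left hE' hr
            rwa [mul_inv_cancel₀ hr.ne'] at this
          have hflt : f z < 1 := min_lt_iff.mpr (Or.inr (by simpa [hf_def] using hrE))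
          simp only [Function.mem_support]
          intro h
          have : f z = 1 := by linarith [sub_eq_zero.mp h]
          linarith
        refine lt_of_lt_of_le ?_ (measure_mono hIio)
        by_contra h
        push_neg at h
        have h0 : gaussianReal 0 1 (Set.Iio t) = 0 := le_antisymm h bot_le
        have := (gaussianReal_absolutelyContinuous' 0 one_ne_zero) h0
        simp [Real.volume_Iio] at this
      have heq : ∫ z, (1 - f z) ∂(gaussianReal 0 1)
          = 1 - ∫ z, f z ∂(gaussianReal 0 1) := by
        rw [integral_sub (integrable_const 1) hf_int]
        simp
      rw [hφ]
      linarith [heq ▸ hsub]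
end
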